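/- Let $\mathcal{X}_i \subseteq \mathbb{R}^{n_i}$ be closed and convex, let $c > 0$, fix $x$, and let $f_i(\cdot, x^{-i})$, $f_{i,\eta}(\cdot, x^{-i})$ be convex functions on $\mathcal{X}_i$ satisfying $|f_i(v, x^{-i}) - f_{i,\eta}(v, x^{-i})| \le \eta\beta$ for all $v \in \mathcal{X}_i$. Let $B_i(x) = \arg\min_{v \in \mathcal{X}_i}[f_i(v, x^{-i}) + \tfrac{c}{2}\|v - x^i\|^2]$ and $B_{i,\eta}(x) = \arg\min_{v \in \mathcal{X}_i}[f_{i,\eta}(v, x^{-i}) + \tfrac{c}{2}\|v - x^i\|^2]$. Then $\|B_i(x) - B_{i,\eta}(x)\|^2 \le \frac{2\eta\beta}{c}$. -/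

import Mathlib

/-! Both proximal objectives `v ↦ f v + c/2 ‖v - xi‖²` are `c`-strongly convex, so each exceeds
its minimum at the other minimiser by at least `c/2 ‖B - Bη‖²`. Adding the two inequalities, the
quadratic terms in `xi` cancel and `c ‖B - Bη‖² ≤ (f Bη - fη Bη) + (fη B - f B) ≤ 2ηβ`. -/

open Filter Topology

variable {E : Type*} [NormedAddCommGroup E] [InnerProductSpace ℝ E] {s : Set E}

lemma ConvexOn.strongConvexOn_add_norm_sub_sq {f : E → ℝ} (hf : ConvexOn ℝ s f) (c : ℝ) (x : E) :
    StrongConvexOn s c fun v ↦ f v + c / 2 * ‖v - x‖ ^ 2 := by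
  rw [strongConvexOn_iff_convex]
  have hexpand : (fun v ↦ f v + c / 2 * ‖v - x‖ ^ 2 - c / 2 * ‖v‖ ^ 2) =
      fun v ↦ f v + ((-c) • innerₛₗ ℝ x) v + c / 2 * ‖x‖ ^ 2 := by
    funext v
    simp only [LinearMap.smul_apply, innerₛₗ_apply_apply, smul_eq_mul, norm_sub_sq_real,
      real_inner_comm x v]
    ring
  rw [hexpand]
  exact (hf.add (((-c) • innerₛₗ ℝ x).convexOn hf.1)).add_const _

lemma StrongConvexOn.add_norm_sub_sq_le_of_isMinOn {g : E → ℝ} {m : ℝ} {a v : E}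
    (hg : StrongConvexOn s m g) (ha : IsMinOn g s a) (has : a ∈ s) (hv : v ∈ s) :
    g a + m / 2 * ‖v - a‖ ^ 2 ≤ g v := by
  set K := m / 2 * ‖v - a‖ ^ 2
  -- compare `g a` with `g (t • v + (1 - t) • a)`, divide by `t`, then let `t → 0`
  have hseg : ∀ t ∈ Set.Ioo (0 : ℝ) 1, g a + (1 - t) * K ≤ g v := by
    rintro t ⟨ht0, ht1⟩
    have hmin := ha (hg.1 hv has ht0.le (sub_nonneg.2 ht1.le) (add_sub_cancel t 1))
    have hconv := hg.2 hv has ht0.le (sub_nonneg.2 ht1.le) (add_sub_cancel t 1)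
    simp only [Set.mem_ofPred_eq, smul_eq_mul] at hmin hconv
    change _ ≤ _ - t * (1 - t) * K at hconv
    have : t * (g a + (1 - t) * K) ≤ t * g v := by nlinarith
    exact le_of_mul_le_mul_left this ht0
  have hlim : Tendsto (fun t : ℝ ↦ g a + (1 - t) * K) (𝓝[>] 0) (𝓝 (g a + K)) := by
    have hcont : Continuous fun t : ℝ ↦ g a + (1 - t) * K := by fun_prop
    simpa using (hcont.tendsto 0).mono_left nhdsWithin_le_nhds
  exact le_of_tendsto hlim (eventually_of_mem (Ioo_mem_nhdsGT one_pos) hseg)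

theorem stmt_11_general {m : ℕ}
    (X : Set (EuclideanSpace ℝ (Fin m)))
    (c η β : ℝ) (hc : 0 < c)
    (f fη : EuclideanSpace ℝ (Fin m) → ℝ)
    (xi : EuclideanSpace ℝ (Fin m))
    (hfconv : ConvexOn ℝ X f) (hfηconv : ConvexOn ℝ X fη)
    (hclose : ∀ v ∈ X, |f v - fη v| ≤ η * β)
    (B Bη : EuclideanSpace ℝ (Fin m))
    (hBmem : B ∈ X)
    (hBopt : ∀ v ∈ X, f B + c / 2 * ‖B - xi‖^2 ≤ f v + c / 2 * ‖v - xi‖^2)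
    (hBηmem : Bη ∈ X)
    (hBηopt : ∀ v ∈ X, fη Bη + c / 2 * ‖Bη - xi‖^2 ≤ fη v + c / 2 * ‖v - xi‖^2) :
    ‖B - Bη‖^2 ≤ 2 * η * β / c := by
  have hB := (hfconv.strongConvexOn_add_norm_sub_sq c xi).add_norm_sub_sq_le_of_isMinOn
    hBopt hBmem hBηmem
  have hBη := (hfηconv.strongConvexOn_add_norm_sub_sq c xi).add_norm_sub_sq_le_of_isMinOn
    hBηopt hBηmem hBmem
  obtain ⟨hcloseB, -⟩ := abs_le.mp (hclose B hBmem)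
  obtain ⟨-, hcloseBη⟩ := abs_le.mp (hclose Bη hBηmem)
  rw [norm_sub_rev Bη B] at hB
  rw [le_div_iff₀ hc]
  linarith

/-- The proximal best-responses of f and its η-smoothing are 2ηβ/c-close. -/
theorem stmt_11 {m : ℕ}
    (X : Set (EuclideanSpace ℝ (Fin m))) (hXcl : IsClosed X) (hXcv : Convex ℝ X)
    (c η β : ℝ) (hc : 0 < c) (hη : 0 < η) (hβ : 0 < β)
    (f fη : EuclideanSpace ℝ (Fin m) → ℝ)
    (xi : EuclideanSpace ℝ (Fin m))
    (hfconv : ConvexOn ℝ X f) (hfηconv : ConvexOn ℝ X fη)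
    (hclose : ∀ v ∈ X, |f v - fη v| ≤ η * β)
    (B Bη : EuclideanSpace ℝ (Fin m))
    (hBmem : B ∈ X)
    (hBopt : ∀ v ∈ X, f B + c / 2 * ‖B - xi‖^2 ≤ f v + c / 2 * ‖v - xi‖^2)
    (hBηmem : Bη ∈ X)
    (hBηopt : ∀ v ∈ X, fη Bη + c / 2 * ‖Bη - xi‖^2 ≤ fη v + c / 2 * ‖v - xi‖^2) :
    ‖B - Bη‖^2 ≤ 2 * η * β / c :=
  stmt_11_general X c η β hc f fη xi hfconv hfηconv hclose B Bη hBmem hBopt hBηmem hBηopt
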